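/- For every finite abstract merge tree S there exists an abstract merge tree R(S) such that S is a.e. isomorphic to R(S) and R(S) is regular; moreover R(S) is unique up to (natural) isomorphism. -/

import Mathlib

open MeasureTheory

/-- A persistent set: a functor from the poset `(ℝ, ≤)` to `Sets`. -/
structure PersistentSet where
  obj : ℝ → Type
  map : ∀ {s t : ℝ}, s ≤ t → obj s → obj t
  map_id : ∀ (t : ℝ) (x : obj t), map le_rfl x = x
  map_comp : ∀ {s t u : ℝ} (h₁ : s ≤ t) (h₂ : t ≤ u) (x : obj s),
    map h₂ (map h₁ x) = map (h₁.trans h₂) x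

/-- `C` witnesses that `S` is an abstract merge tree: empty below all critical values,
a singleton above all critical values, and bijective transition maps away from `C`. -/
def IsMergeTreeCriticalSet (S : PersistentSet) (C : Finset ℝ) : Prop :=
  (∀ t : ℝ, (∀ c ∈ C, t < c) → IsEmpty (S.obj t)) ∧
  (∀ t : ℝ, (∀ c ∈ C, c < t) → ∃ x : S.obj t, ∀ y : S.obj t, y = x) ∧
  (∀ (s t : ℝ) (h : s ≤ t), (∀ c ∈ C, c < s ∨ t < c) → Function.Bijective (S.map h))

/-- A (finite) abstract merge tree. -/
def IsAbstractMergeTree (S : PersistentSet) : Prop :=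
  (∀ t : ℝ, Finite (S.obj t)) ∧ ∃ C : Finset ℝ, IsMergeTreeCriticalSet S C

/-- `S` is regular: all topological changes happen *at* the critical values, i.e. the
transition maps are bijective on small intervals to the right of every point. -/
def RegularPS (S : PersistentSet) : Prop :=
  ∀ t : ℝ, ∃ ε > (0 : ℝ), ∀ (t' : ℝ) (h : t ≤ t'), t' < t + ε → Function.Bijective (S.map h)

/-- Natural isomorphism of persistent sets. -/
def PSIso (S S' : PersistentSet) : Prop :=
  ∃ α : ∀ t : ℝ, S.obj t ≃ S'.obj t,
    ∀ (s t : ℝ) (h : s ≤ t) (x : S.obj s), α t (S.map h x) = S'.map h (α s x)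

/-- Almost everywhere isomorphism of persistent sets. -/
def AEIso (S S' : PersistentSet) : Prop :=
  ∃ Z : Set ℝ, MeasurableSet Z ∧ volume Zᶜ = 0 ∧
    ∃ α : ∀ t : ℝ, t ∈ Z → (S.obj t ≃ S'.obj t),
      ∀ (s t : ℝ) (hs : s ∈ Z) (ht : t ∈ Z) (h : s ≤ t) (x : S.obj s),
        α t ht (S.map h x) = S'.map h (α s hs x)

/-! The regular representative takes at `t` the value of `S` just to the right of `t`:
`R(S)(t) = S(ρ t)` for a monotone `ρ` with `t < ρ t` and no critical value in `(t, ρ t]`.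
For uniqueness, two regular persistent sets `R`, `R'` that agree on a co-null, hence dense,
set `Z` of times are isomorphic: by regularity `R(t) ≅ R(u) ≅ R'(u) ≅ R'(t)` for any `u ∈ Z`
slightly to the right of `t`, and the choice of `u` does not matter because the isomorphisms
on `Z` are natural. -/

def PersistentSet.precomp (S : PersistentSet) {ρ : ℝ → ℝ} (hρ : Monotone ρ) : PersistentSet where
  obj t := S.obj (ρ t)
  map h := S.map (hρ h)
  map_id t := S.map_id (ρ t)
  map_comp h₁ h₂ := S.map_comp (hρ h₁) (hρ h₂)

-- the `ρ` of the header: at most halfway from `t` to any element of `C` beyond `t`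
noncomputable def rightShift (C : Finset ℝ) (t : ℝ) : ℝ :=
  C.fold min (t + 1) fun c => if t < c then (t + c) / 2 else t + 1

section rightShift

variable (C : Finset ℝ)

theorem lt_rightShift (t : ℝ) : t < rightShift C t :=
  (Finset.lt_fold_min _).2 ⟨by linarith, fun c _ => by split_ifs <;> linarith⟩

theorem rightShift_lt {t c : ℝ} (hc : c ∈ C) (htc : t < c) : rightShift C t < c :=
  (Finset.fold_min_lt _).2 (Or.inr ⟨c, hc, by rw [if_pos htc]; linarith⟩)

theorem rightShift_mono : Monotone (rightShift C) := by
  intro s t hst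
  refine (Finset.le_fold_min _).2
    ⟨(Finset.fold_min_le _).2 (Or.inl (by linarith)), fun c hc => ?_⟩
  refine (Finset.fold_min_le _).2 (Or.inr ⟨c, hc, ?_⟩)
  split_ifs <;> linarith

end rightShift

noncomputable def PersistentSet.regularization (S : PersistentSet) (C : Finset ℝ) :
    PersistentSet :=
  S.precomp (rightShift_mono C)

namespace IsMergeTreeCriticalSet

variable {S : PersistentSet} {C : Finset ℝ}

theorem regularization (hC : IsMergeTreeCriticalSet S C) :
    IsMergeTreeCriticalSet (S.regularization C) C := by
  obtain ⟨hempty, hsingleton, hbij⟩ := hC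
  refine ⟨fun t ht => hempty _ fun c hc => rightShift_lt C hc (ht c hc),
    fun t ht => hsingleton _ fun c hc => (ht c hc).trans (lt_rightShift C t),
    fun s t h hst => hbij _ _ _ fun c hc => ?_⟩
  rcases hst c hc with hcs | htc
  · exact Or.inl (hcs.trans (lt_rightShift C s))
  · exact Or.inr (rightShift_lt C hc htc)

theorem regularPS_regularization (hC : IsMergeTreeCriticalSet S C) :
    RegularPS (S.regularization C) := by
  intro t
  refine ⟨rightShift C t - t, sub_pos.2 (lt_rightShift C t), fun t' h ht' => ?_⟩
  refine hC.2.2 _ _ _ fun c hc => ?_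
  rcases le_or_gt c t with hct | htc
  · exact Or.inl (hct.trans_lt (lt_rightShift C t))
  · exact Or.inr (rightShift_lt C hc (by linarith [rightShift_lt C hc htc]))

theorem aeIso_regularization (hC : IsMergeTreeCriticalSet S C) :
    AEIso S (S.regularization C) := by
  have hbij : ∀ t ∉ (C : Set ℝ), Function.Bijective (S.map (lt_rightShift C t).le) :=
    fun t ht => hC.2.2 _ _ _ fun c hc =>
      (lt_or_gt_of_ne fun hct : c = t => ht (hct ▸ hc)).imp_right (rightShift_lt C hc)
  refine ⟨(C : Set ℝ)ᶜ, C.finite_toSet.measurableSet.compl,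
    by rw [compl_compl]; exact C.finite_toSet.measure_zero _,
    fun t ht => Equiv.ofBijective _ (hbij t ht), fun s t _ _ h x => ?_⟩
  change S.map _ (S.map h x) = S.map _ (S.map _ x)
  rw [S.map_comp, S.map_comp]

end IsMergeTreeCriticalSet

namespace AEIso

variable {R S T : PersistentSet}

theorem symm (h : AEIso S T) : AEIso T S := by
  obtain ⟨Z, hZm, hZ, α, hα⟩ := h
  refine ⟨Z, hZm, hZ, fun t ht => (α t ht).symm, fun s t hs ht h x => ?_⟩
  rw [Equiv.symm_apply_eq, hα s t hs ht, Equiv.apply_symm_apply]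

theorem trans (h₁ : AEIso R S) (h₂ : AEIso S T) : AEIso R T := by
  obtain ⟨Z₁, hZ₁m, hZ₁, α₁, hα₁⟩ := h₁
  obtain ⟨Z₂, hZ₂m, hZ₂, α₂, hα₂⟩ := h₂
  refine ⟨Z₁ ∩ Z₂, hZ₁m.inter hZ₂m,
    by rw [Set.compl_inter]; exact measure_union_null hZ₁ hZ₂,
    fun t ht => (α₁ t ht.1).trans (α₂ t ht.2), fun s t hs ht h x => ?_⟩
  simp only [Equiv.trans_apply, hα₁ s t hs.1 ht.1, hα₂ s t hs.2 ht.2]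

end AEIso

open Filter Topology in
theorem RegularPS.eventually_bijective_map {R : PersistentSet} (hR : RegularPS R) (t : ℝ) :
    ∀ᶠ δ in 𝓝[>] (0 : ℝ), ∀ (a b : ℝ) (h : a ≤ b), t ≤ a → b < t + δ →
      Function.Bijective (R.map h) := by
  obtain ⟨ε, hε, hbij⟩ := hR t
  filter_upwards [Ioo_mem_nhdsGT hε] with δ hδ a b h hta hbt
  have hcomp : R.map h ∘ R.map hta = R.map (hta.trans h) := funext (R.map_comp hta h)
  rw [← Function.Bijective.of_comp_iff _ (hbij a hta (by linarith [hδ.2])), hcomp]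
  exact hbij b _ (by linarith [hδ.2])

theorem AEIso.psIso_of_regularPS {R R' : PersistentSet} (h : AEIso R R') (hR : RegularPS R)
    (hR' : RegularPS R') : PSIso R R' := by
  obtain ⟨Z, -, hZ, α, hα⟩ := h
  have hwindow : ∀ t, ∃ δ > 0, ∀ (a b : ℝ) (h : a ≤ b), t ≤ a → b < t + δ →
      Function.Bijective (R.map h) ∧ Function.Bijective (R'.map h) := fun t =>
    (((hR.eventually_bijective_map t).and (hR'.eventually_bijective_map t)).and
      self_mem_nhdsWithin).exists.imp fun δ ⟨⟨h₁, h₂⟩, hδ⟩ =>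
        ⟨hδ, fun a b h hta hbt => ⟨h₁ a b h hta hbt, h₂ a b h hta hbt⟩⟩
  choose δ hδ hbij using hwindow
  choose u huZ htu hut using fun t =>
    (Measure.dense_of_ae (μ := volume) (mem_ae_iff.2 hZ)).exists_between
      (lt_add_of_pos_right t (hδ t))
  have hbij_u : ∀ t,
      Function.Bijective (R.map (htu t).le) ∧ Function.Bijective (R'.map (htu t).le) :=
    fun t => hbij t t (u t) _ le_rfl (hut t)
  let f t : R.obj t ≃ R'.obj t := (Equiv.ofBijective _ (hbij_u t).1).trans
    ((α (u t) (huZ t)).trans (Equiv.ofBijective _ (hbij_u t).2).symm)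
  have hf : ∀ t y v (hv : v ∈ Z) (huv : u t ≤ v),
      R'.map ((htu t).le.trans huv) (f t y) = α v hv (R.map ((htu t).le.trans huv) y) := by
    intro t y v hv huv
    rw [← R'.map_comp (htu t).le huv, ← R.map_comp (htu t).le huv, hα _ _ (huZ t) hv]
    exact congrArg _ (Equiv.ofBijective_apply_symm_apply _ (hbij_u t).2 _)
  refine ⟨f, fun s t hst x => ?_⟩
  have hcompare : ∀ v (hv : v ∈ Z), u s ≤ v → ∀ htv : u t ≤ v,
      Function.Injective (R'.map ((htu t).le.trans htv)) →
        f t (R.map hst x) = R'.map hst (f s x) := by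
    intro v hv hsv htv hinj
    apply hinj
    rw [R'.map_comp, hf t _ v hv htv, hf s x v hv hsv, R.map_comp]
  rcases le_total (u s) (u t) with hst' | hts'
  · exact hcompare _ (huZ t) hst' le_rfl (hbij t t _ _ le_rfl (hut t)).2.1
  · exact hcompare _ (huZ s) le_rfl hts' (hbij s t _ _ hst (hut s)).2.1

theorem exists_unique_regular_representative (S : PersistentSet)
    (hS : IsAbstractMergeTree S) :
    (∃ R : PersistentSet, IsAbstractMergeTree R ∧ RegularPS R ∧ AEIso S R) ∧
    (∀ R R' : PersistentSet, IsAbstractMergeTree R → RegularPS R → AEIso S R →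
      IsAbstractMergeTree R' → RegularPS R' → AEIso S R' → PSIso R R') := by
  obtain ⟨hfinite, C, hC⟩ := hS
  refine ⟨⟨S.regularization C, ⟨fun t => hfinite _, C, hC.regularization⟩,
    hC.regularPS_regularization, hC.aeIso_regularization⟩, ?_⟩
  intro R R' _ hR hSR _ hR' hSR'
  exact (hSR.symm.trans hSR').psIso_of_regularPS hR hR'
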